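/- Discrete entropy inequality: under hypotheses (H2) (i.e., $g' \geq 0$, $v' \leq 0$, monotone kernel weights) and the CFL condition $\lambda(\gamma_0\|v'\|\|g\| + \|v\|\|g'\|) \leq 1$, the scheme values $\rho_j^{n+1} = \rho_j^n - \lambda(V_{j+1/2}^n g(\rho_j^n) - V_{j-1/2}^n g(\rho_{j-1}^n))$ satisfy, for every $\kappa \in [0,\rho_{\max}]$: $|\rho_j^{n+1}-\kappa| - |\rho_j^n - \kappa| + \lambda(F^\kappa_{j+1/2}(\rho_j^n) - F^\kappa_{j-1/2}(\rho_{j-1}^n)) + \lambda\,\operatorname{sgn}(\rho_j^{n+1}-\kappa)\, g(\kappa)(V_{j+1/2}^n - V_{j-1/2}^n) \leq 0$. -/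

import Mathlib

/-!
Since `g` is nondecreasing, `g (max u κ) - g (min u κ) = |g u - g κ|`, and
`ρnext j - κ = (d - λ V_j e) + λ V_{j-1} (g ρ_{j-1} - g κ) - λ g κ (V_j - V_{j-1})` with
`d = ρ_j - κ`, `e = g ρ_j - g κ`. As `0 ≤ V ≤ ‖v‖` and `g` is `‖g'‖`-Lipschitz, the CFL condition
gives `λ V_j |e| ≤ |d|`; since `d` and `e` have the same sign, `|d - λ V_j e| = |d| - λ V_j |e|`.
Writing `|ρnext j - κ| = sgn (ρnext j - κ) (ρnext j - κ)` and bounding `sgn · t ≤ |t|` termwise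
yields the inequality; the `g κ` terms cancel against the sign term.
-/

noncomputable def supAbs (f : ℝ → ℝ) (s : Set ℝ) : ℝ :=
  sSup ((fun x => |f x|) '' s)

open Set Finset

theorem supAbs_nonneg (f : ℝ → ℝ) (s : Set ℝ) : 0 ≤ supAbs f s :=
  Real.sSup_nonneg <| Set.forall_mem_image.2 fun _ _ => abs_nonneg _

theorem abs_le_supAbs {f : ℝ → ℝ} {s : Set ℝ} (hs : IsCompact s) (hf : ContinuousOn f s)
    {x : ℝ} (hx : x ∈ s) : |f x| ≤ supAbs f s :=
  le_csSup (hs.image_of_continuousOn hf.abs).bddAbove (mem_image_of_mem _ hx)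

section Derivative

variable {f f' : ℝ → ℝ} {s : Set ℝ}

theorem abs_sub_le_supAbs_deriv_mul (hs : Convex ℝ s) (hsc : IsCompact s)
    (hf : ∀ x ∈ s, HasDerivAt f (f' x) x) (hf' : ContinuousOn f' s) {x y : ℝ}
    (hx : x ∈ s) (hy : y ∈ s) : |f y - f x| ≤ supAbs f' s * |y - x| :=
  Convex.norm_image_sub_le_of_norm_hasDerivWithin_le (fun z hz => (hf z hz).hasDerivWithinAt)
    (fun _ hz => abs_le_supAbs hsc hf' hz) hs hx hy

theorem monotoneOn_of_hasDerivAt_nonneg (hs : Convex ℝ s)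
    (hf : ∀ x ∈ s, HasDerivAt f (f' x) x) (hf'₀ : ∀ x ∈ s, 0 ≤ f' x) : MonotoneOn f s :=
  monotoneOn_of_hasDerivWithinAt_nonneg hs
    (fun x hx => (hf x hx).continuousAt.continuousWithinAt)
    (fun x hx => (hf x (interior_subset hx)).hasDerivWithinAt)
    (fun x hx => hf'₀ x (interior_subset hx))

end Derivative

section Monotone

variable {f : ℝ → ℝ} {s : Set ℝ} {x y : ℝ}

theorem MonotoneOn.map_max_sub_map_min (hf : MonotoneOn f s) (hx : x ∈ s) (hy : y ∈ s) :
    f (max x y) - f (min x y) = |f x - f y| := by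
  rw [hf.map_max hx hy, hf.map_min hx hy, max_sub_min_eq_abs']

theorem MonotoneOn.sub_mul_sub_nonneg (hf : MonotoneOn f s) (hx : x ∈ s) (hy : y ∈ s) :
    0 ≤ (x - y) * (f x - f y) := by
  rcases le_total x y with h | h
  · exact mul_nonneg_of_nonpos_of_nonpos (sub_nonpos.2 h) (sub_nonpos.2 (hf hx hy h))
  · exact mul_nonneg (sub_nonneg.2 h) (sub_nonneg.2 (hf hy hx h))

end Monotone

theorem sum_mul_mem_Icc_of_sum_eq_one {ι : Type*} {t : Finset ι} {w a : ι → ℝ} {M : ℝ}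
    (hw : ∀ i ∈ t, 0 ≤ w i) (hw₁ : ∑ i ∈ t, w i = 1) (ha : ∀ i ∈ t, a i ∈ Icc 0 M) :
    ∑ i ∈ t, w i * a i ∈ Icc 0 M := by
  refine ⟨sum_nonneg fun i hi => mul_nonneg (hw i hi) (ha i hi).1, ?_⟩
  calc ∑ i ∈ t, w i * a i ≤ ∑ i ∈ t, w i * M :=
        sum_le_sum fun i hi => mul_le_mul_of_nonneg_left (ha i hi).2 (hw i hi)
    _ = M := by rw [← sum_mul, hw₁, one_mul]

theorem Real.sign_mul_le_abs (x y : ℝ) : Real.sign x * y ≤ |y| := by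
  rcases Real.sign_apply_eq x with h | h | h <;> rw [h]
  · simpa using neg_le_abs y
  · simp
  · simpa using le_abs_self y

theorem Real.sign_mul_self (x : ℝ) : Real.sign x * x = |x| := by
  rcases lt_trichotomy x 0 with h | rfl | h
  · rw [Real.sign_of_neg h, abs_of_neg h, neg_one_mul]
  · simp
  · rw [Real.sign_of_pos h, abs_of_pos h, one_mul]

theorem abs_sub_eq_abs_sub_abs {d c : ℝ} (hdc : 0 ≤ d * c) (hc : |c| ≤ |d|) :
    |d - c| = |d| - |c| := by
  rcases le_total 0 d with hd | hd
  · have hc₀ : 0 ≤ c := by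
      by_contra! hneg
      rw [abs_of_neg hneg, abs_of_nonneg hd] at hc
      nlinarith
    rw [abs_of_nonneg hd, abs_of_nonneg hc₀] at hc ⊢
    exact abs_of_nonneg (by linarith)
  · have hc₀ : c ≤ 0 := by
      by_contra! hpos
      rw [abs_of_pos hpos, abs_of_nonpos hd] at hc
      nlinarith
    rw [abs_of_nonpos hd, abs_of_nonpos hc₀] at hc ⊢
    rw [abs_of_nonpos (by linarith)]
    ring

/-- `b`, `ga`, `gb`, `gκ`, `Vj`, `Vm` stand for `ρ j`, `g (ρ (j - 1))`, `g (ρ j)`, `g κ`, `V j`,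
`V (j - 1)`. -/
theorem cell_entropy_le {lam Vj Vm b κ x ga gb gκ : ℝ} (hlam : 0 ≤ lam) (hVj : 0 ≤ Vj)
    (hVm : 0 ≤ Vm) (hmono : 0 ≤ (b - κ) * (gb - gκ)) (hcfl : lam * Vj * |gb - gκ| ≤ |b - κ|)
    (hx : x = b - lam * (Vj * gb - Vm * ga)) :
    |x - κ| - |b - κ| + lam * (Vj * |gb - gκ| - Vm * |ga - gκ|)
      + lam * Real.sign (x - κ) * gκ * (Vj - Vm) ≤ 0 := by
  have hbal : |b - κ - lam * Vj * (gb - gκ)| = |b - κ| - lam * Vj * |gb - gκ| := by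
    rw [abs_sub_eq_abs_sub_abs, abs_mul, abs_of_nonneg (mul_nonneg hlam hVj)]
    · rw [mul_left_comm]; exact mul_nonneg (mul_nonneg hlam hVj) hmono
    · rwa [abs_mul, abs_of_nonneg (mul_nonneg hlam hVj)]
  have hsign_j := Real.sign_mul_le_abs (x - κ) (b - κ - lam * Vj * (gb - gκ))
  have hsign_jm := Real.sign_mul_le_abs (x - κ) (lam * Vm * (ga - gκ))
  rw [abs_mul, abs_of_nonneg (mul_nonneg hlam hVm)] at hsign_jm
  have hsplit : x - κ = b - κ - lam * Vj * (gb - gκ) + lam * Vm * (ga - gκ)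
      - lam * gκ * (Vj - Vm) := by
    rw [hx]; ring
  rw [← Real.sign_mul_self (x - κ)]
  nth_rewrite 2 [hsplit]
  linear_combination hsign_j + hsign_jm + hbal

theorem discrete_entropy_inequality_general
    (ρmax : ℝ)
    (g g' v v' : ℝ → ℝ)
    (hg_deriv : ∀ x ∈ Set.Icc (0:ℝ) ρmax, HasDerivAt g (g' x) x)
    (hg'_cont : ContinuousOn g' (Set.Icc 0 ρmax))
    (hg'_nonneg : ∀ x ∈ Set.Icc (0:ℝ) ρmax, 0 ≤ g' x)
    (hv_deriv : ∀ x ∈ Set.Icc (0:ℝ) ρmax, HasDerivAt v (v' x) x)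
    (hv_nonneg : ∀ x ∈ Set.Icc (0:ℝ) ρmax, 0 ≤ v x)
    (N : ℕ) (hN : 1 ≤ N) (γ : ℕ → ℝ)
    (hγ_nonneg : ∀ k < N, 0 ≤ γ k)
    (hγ_sum : ∑ k ∈ Finset.range N, γ k = 1)
    (lam : ℝ) (hlam : 0 < lam)
    (hCFL : lam * (γ 0 * supAbs v' (Set.Icc 0 ρmax) * supAbs g (Set.Icc 0 ρmax)
        + supAbs v (Set.Icc 0 ρmax) * supAbs g' (Set.Icc 0 ρmax)) ≤ 1)
    (ρ ρnext : ℤ → ℝ)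
    (hρ : ∀ j, ρ j ∈ Set.Icc (0:ℝ) ρmax)
    (V : ℤ → ℝ)
    (hV : ∀ j, V j = ∑ k ∈ Finset.range N, γ k * v (ρ (j + k + 1)))
    (hscheme : ∀ j, ρnext j =
      ρ j - lam * (V j * g (ρ j) - V (j - 1) * g (ρ (j - 1))))
    (κ : ℝ) (hκ : κ ∈ Set.Icc (0:ℝ) ρmax) :
    ∀ j : ℤ,
      |ρnext j - κ| - |ρ j - κ|
        + lam * ((V j * g (max (ρ j) κ) - V j * g (min (ρ j) κ))
            - (V (j - 1) * g (max (ρ (j - 1)) κ) - V (j - 1) * g (min (ρ (j - 1)) κ)))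
        + lam * Real.sign (ρnext j - κ) * g κ * (V j - V (j - 1)) ≤ 0 := by
  intro j
  set I := Icc (0:ℝ) ρmax
  have hg_mono : MonotoneOn g I :=
    monotoneOn_of_hasDerivAt_nonneg (convex_Icc 0 ρmax) hg_deriv hg'_nonneg
  have hV_mem (i : ℤ) : V i ∈ Icc 0 (supAbs v I) := by
    rw [hV i]
    refine sum_mul_mem_Icc_of_sum_eq_one (fun k hk => hγ_nonneg k (mem_range.1 hk)) hγ_sum
      fun k _ => ⟨hv_nonneg _ (hρ _), ?_⟩
    exact (le_abs_self _).trans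
      (abs_le_supAbs isCompact_Icc (HasDerivAt.continuousOn hv_deriv) (hρ _))
  have hCFL_v : lam * supAbs v I * supAbs g' I ≤ 1 := by
    have hγ₀ : 0 ≤ γ 0 * supAbs v' I * supAbs g I :=
      mul_nonneg (mul_nonneg (hγ_nonneg 0 hN) (supAbs_nonneg v' I)) (supAbs_nonneg g I)
    nlinarith
  rw [← mul_sub, ← mul_sub, hg_mono.map_max_sub_map_min (hρ j) hκ,
    hg_mono.map_max_sub_map_min (hρ (j - 1)) hκ]
  refine cell_entropy_le hlam.le (hV_mem j).1 (hV_mem (j - 1)).1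
    (hg_mono.sub_mul_sub_nonneg (hρ j) hκ) ?_ (hscheme j)
  calc lam * V j * |g (ρ j) - g κ|
      ≤ lam * supAbs v I * (supAbs g' I * |ρ j - κ|) := by
        refine mul_le_mul (mul_le_mul_of_nonneg_left (hV_mem j).2 hlam.le) ?_ (abs_nonneg _)
          (mul_nonneg hlam.le (supAbs_nonneg v I))
        exact abs_sub_le_supAbs_deriv_mul (convex_Icc 0 ρmax) isCompact_Icc hg_deriv hg'_cont
          hκ (hρ j)
    _ ≤ |ρ j - κ| := by
        rw [← mul_assoc]
        exact mul_le_of_le_one_left (abs_nonneg _) hCFL_v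

theorem discrete_entropy_inequality
    (ρmax : ℝ) (hρmax : 0 < ρmax)
    (g g' v v' : ℝ → ℝ)
    (hg_deriv : ∀ x ∈ Set.Icc (0:ℝ) ρmax, HasDerivAt g (g' x) x)
    (hg'_cont : ContinuousOn g' (Set.Icc 0 ρmax))
    (hg_nonneg : ∀ x ∈ Set.Icc (0:ℝ) ρmax, 0 ≤ g x)
    (hg'_nonneg : ∀ x ∈ Set.Icc (0:ℝ) ρmax, 0 ≤ g' x)
    (hv_deriv : ∀ x ∈ Set.Icc (0:ℝ) ρmax, HasDerivAt v (v' x) x)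
    (hv'_cont : ContinuousOn v' (Set.Icc 0 ρmax))
    (hv_nonneg : ∀ x ∈ Set.Icc (0:ℝ) ρmax, 0 ≤ v x)
    (hv'_nonpos : ∀ x ∈ Set.Icc (0:ℝ) ρmax, v' x ≤ 0)
    (N : ℕ) (hN : 1 ≤ N) (γ : ℕ → ℝ)
    (hγ_nonneg : ∀ k < N, 0 ≤ γ k)
    (hγ_mono : ∀ k, k + 1 < N → γ (k + 1) ≤ γ k)
    (hγ_sum : ∑ k ∈ Finset.range N, γ k = 1)
    (lam : ℝ) (hlam : 0 < lam)
    (hCFL : lam * (γ 0 * supAbs v' (Set.Icc 0 ρmax) * supAbs g (Set.Icc 0 ρmax)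
        + supAbs v (Set.Icc 0 ρmax) * supAbs g' (Set.Icc 0 ρmax)) ≤ 1)
    (ρ ρnext : ℤ → ℝ)
    (hρ : ∀ j, ρ j ∈ Set.Icc (0:ℝ) ρmax)
    (V : ℤ → ℝ)
    (hV : ∀ j, V j = ∑ k ∈ Finset.range N, γ k * v (ρ (j + k + 1)))
    (hscheme : ∀ j, ρnext j =
      ρ j - lam * (V j * g (ρ j) - V (j - 1) * g (ρ (j - 1))))
    (κ : ℝ) (hκ : κ ∈ Set.Icc (0:ℝ) ρmax) :
    ∀ j : ℤ,
      |ρnext j - κ| - |ρ j - κ|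
        + lam * ((V j * g (max (ρ j) κ) - V j * g (min (ρ j) κ))
            - (V (j - 1) * g (max (ρ (j - 1)) κ) - V (j - 1) * g (min (ρ (j - 1)) κ)))
        + lam * Real.sign (ρnext j - κ) * g κ * (V j - V (j - 1)) ≤ 0 :=
  discrete_entropy_inequality_general ρmax g g' v v' hg_deriv hg'_cont hg'_nonneg hv_deriv hv_nonneg
    N hN γ hγ_nonneg hγ_sum lam hlam hCFL ρ ρnext hρ V hV hscheme κ hκ
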